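/- arXiv:2301.12384 — 3 statements merged into one kernel-verified Lean document; each statement's English description precedes it below -/
import Mathlib

section
/- Let G be a finitely generated group with finite symmetric generating set S acting continuously on a compact metric space X, and let H be a finite-index subgroup of G. If the restricted action of H on X has the shadowing property, then the action of G on X has the shadowing property. -/
open MeasureTheory

def ContGroupAction (G : Type*) [Group G] (X : Type*) [MetricSpace X] (φ : G → X → X) : Prop :=
  (∀ g : G, Continuous (φ g)) ∧ (∀ g h : G, ∀ x : X, φ (g * h) x = φ g (φ h x)) ∧
    (∀ x : X, φ (1 : G) x = x)

def IsPseudoOrbit {G : Type*} [Group G] {X : Type*} [MetricSpace X]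
    (S : Set G) (ψ : G → X → X) (δ : ℝ) (f : G → X) : Prop :=
  ∀ s ∈ S, ∀ g : G, dist (f (s * g)) (ψ s (f g)) < δ

def CloseActions {G : Type*} [Group G] {X : Type*} [MetricSpace X]
    (S : Set G) (φ ψ : G → X → X) (δ : ℝ) : Prop :=
  ∀ s ∈ S, ∀ x : X, dist (φ s x) (ψ s x) < δ

def PersistentShadowing {G : Type*} [Group G] {X : Type*} [MetricSpace X]
    (S : Set G) (φ : G → X → X) : Prop :=
  ∀ ε > (0:ℝ), ∃ δ > (0:ℝ), ∀ ψ : G → X → X, ContGroupAction G X ψ → CloseActions S φ ψ δ →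
    ∀ f : G → X, IsPseudoOrbit S ψ δ f → ∃ p : X, ∀ g : G, dist (f g) (ψ g p) < ε

def Shadowing {G : Type*} [Group G] {X : Type*} [MetricSpace X]
    (S : Set G) (φ : G → X → X) : Prop :=
  ∀ ε > (0:ℝ), ∃ δ > (0:ℝ), ∀ f : G → X, IsPseudoOrbit S φ δ f →
    ∃ p : X, ∀ g : G, dist (f g) (φ g p) < ε

def PShSet {G : Type*} [Group G] {X : Type*} [MetricSpace X]
    (S : Set G) (φ : G → X → X) (δ ε : ℝ) : Set X :=
  {x | ∀ ψ : G → X → X, ContGroupAction G X ψ → CloseActions S φ ψ δ →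
    ∀ f : G → X, IsPseudoOrbit S ψ δ f → f 1 = x →
      ∃ p : X, ∀ g : G, dist (f g) (ψ g p) < ε}

def PShPoint {G : Type*} [Group G] {X : Type*} [MetricSpace X]
    (S : Set G) (φ : G → X → X) (x : X) : Prop :=
  ∀ ε > (0:ℝ), ∃ δ > (0:ℝ), x ∈ PShSet S φ δ ε

def ShPoint {G : Type*} [Group G] {X : Type*} [MetricSpace X]
    (S : Set G) (φ : G → X → X) (x : X) : Prop :=
  ∀ ε > (0:ℝ), ∃ δ > (0:ℝ), ∀ f : G → X, IsPseudoOrbit S φ δ f → f 1 = x →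
    ∃ p : X, ∀ g : G, dist (f g) (φ g p) < ε

def UPersisBetaPoint {G : Type*} [Group G] {X : Type*} [MetricSpace X]
    (S : Set G) (φ : G → X → X) (x : X) : Prop :=
  ∀ ε > (0:ℝ), ∃ δ > (0:ℝ), ∀ ψ : G → X → X, ContGroupAction G X ψ → CloseActions S φ ψ δ →
    ∀ x' : X, dist x' x < δ → ∃ y : X, ∀ g : G, dist (φ g x') (ψ g y) < ε

def BetaPersistent {G : Type*} [Group G] {X : Type*} [MetricSpace X]
    (S : Set G) (φ : G → X → X) : Prop :=
  ∀ ε > (0:ℝ), ∃ δ > (0:ℝ), ∀ ψ : G → X → X, ContGroupAction G X ψ → CloseActions S φ ψ δ →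
    ∀ x : X, ∃ y : X, ∀ g : G, dist (φ g x) (ψ g y) < ε

def CompatiblePSh {G : Type*} [Group G] {X : Type*} [MetricSpace X] [MeasurableSpace X]
    (S : Set G) (φ : G → X → X) (μ : Measure X) : Prop :=
  ∀ ε > (0:ℝ), ∃ δ > (0:ℝ), ∀ A : Set X, MeasurableSet A → 0 < μ A →
    (A ∩ PShSet S φ δ ε).Nonempty

def MeasSupp {X : Type*} [MetricSpace X] [MeasurableSpace X] (μ : Measure X) : Set X :=
  {x | ∀ U : Set X, IsOpen U → x ∈ U → 0 < μ U}

/-!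
Restricting a pseudo-orbit `f` of `G` to `H` gives a pseudo-orbit of `H`, which is shadowed by
some `p`. Every `g ∈ G` factors as `g = r * h` with `h ∈ H` and `r` one of finitely many coset
representatives. For a fixed `r`, the jump `d(f (r * x), φ r (f x))` is small uniformly in `x` once
the pseudo-orbit is fine enough (compose the generator steps, using uniform continuity on the
compact space), and the finitely many `r` act equicontinuously; the triangle inequality then
shows that `p` shadows `f` on all of `G`.
-/

open Filter Topology

section

variable {G : Type*} [Group G] {X : Type*} [MetricSpace X] {S : Set G} {φ : G → X → X}

theorem IsPseudoOrbit.mono {δ δ' : ℝ} {f : G → X} (hf : IsPseudoOrbit S φ δ f) (h : δ ≤ δ') :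
    IsPseudoOrbit S φ δ' f :=
  fun s hs g => (hf s hs g).trans_le h

theorem IsPseudoOrbit.subgroup {H : Subgroup G} {A : Set H} (hAS : ∀ a ∈ A, (a : G) ∈ S)
    {δ : ℝ} {f : G → X} (hf : IsPseudoOrbit S φ δ f) :
    IsPseudoOrbit A (fun h : H => φ h) δ (fun h : H => f h) :=
  fun a ha h => hf a (hAS a ha) h

theorem ContGroupAction.uniformContinuous [CompactSpace X] (hφ : ContGroupAction G X φ) (g : G) :
    UniformContinuous (φ g) :=
  CompactSpace.uniformContinuous_of_continuous (hφ.1 g)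

theorem ContGroupAction.eventually_pseudoOrbit_dist_mul_lt [CompactSpace X]
    (hφ : ContGroupAction G X φ) {g : G} (hg : g ∈ Subgroup.closure S) {ε : ℝ} (hε : 0 < ε) :
    ∀ᶠ δ in 𝓝[>] 0, ∀ f : G → X, IsPseudoOrbit S φ δ f →
      ∀ x, dist (f (g * x)) (φ g (f x)) < ε := by
  induction hg using Subgroup.closure_induction generalizing ε with
  | mem s hs =>
    filter_upwards [nhdsWithin_le_nhds (eventually_lt_nhds hε)] with δ hδ f hf x
    exact (hf s hs x).trans hδ
  | one =>
    refine Eventually.of_forall fun δ f _ x => ?_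
    rwa [one_mul, hφ.2.2, dist_self]
  | mul a b _ _ iha ihb =>
    obtain ⟨η, hη, hcont⟩ :=
      Metric.uniformContinuous_iff.1 (hφ.uniformContinuous a) _ (half_pos hε)
    filter_upwards [iha (half_pos hε), ihb hη] with δ ha hb f hf x
    calc dist (f (a * b * x)) (φ (a * b) (f x))
        ≤ dist (f (a * (b * x))) (φ a (f (b * x))) + dist (φ a (f (b * x))) (φ a (φ b (f x))) := by
          rw [mul_assoc, hφ.2.1]
          exact dist_triangle _ _ _
      _ < ε / 2 + ε / 2 := add_lt_add (ha f hf _) (hcont (hb f hf x))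
      _ = ε := add_halves ε
  | inv a _ iha =>
    obtain ⟨η, hη, hcont⟩ := Metric.uniformContinuous_iff.1 (hφ.uniformContinuous a⁻¹) _ hε
    filter_upwards [iha hη] with δ ha f hf x
    -- apply `φ a⁻¹` to the jump of `a` at `a⁻¹ * x`
    have h := hcont (ha f hf (a⁻¹ * x))
    rwa [mul_inv_cancel_left, ← hφ.2.1, inv_mul_cancel, hφ.2.2, dist_comm] at h

end

theorem QuotientGroup.exists_out_mul_eq {G : Type*} [Group G] (H : Subgroup G) (g : G) :
    ∃ (q : G ⧸ H) (h : H), q.out * h = g := by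
  obtain ⟨h, hh⟩ := QuotientGroup.mk_out_eq_mul H g
  exact ⟨g, h⁻¹, by simp [hh]⟩

theorem stmt1_general {G : Type*} [Group G] {X : Type*} [MetricSpace X] [CompactSpace X]
    (S : Set G)
    (hSgen : Subgroup.closure S = ⊤)
    (φ : G → X → X) (hφ : ContGroupAction G X φ)
    (H : Subgroup G) (hH : H.FiniteIndex)
    (A : Set H) (hAS : ∀ a ∈ A, (a : G) ∈ S)
    (hrest : Shadowing A (fun (h : H) => φ (h : G))) :
    Shadowing S φ := by
  intro ε hε
  have hreps : UniformEquicontinuous fun q : G ⧸ H => φ q.out :=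
    uniformEquicontinuous_finite.2 fun q => hφ.uniformContinuous q.out
  obtain ⟨η, hη, hequi⟩ := Metric.uniformEquicontinuous_iff.1 hreps _ (half_pos hε)
  obtain ⟨δ₁, hδ₁, hshadow⟩ := hrest η hη
  have htrack : ∀ᶠ δ in 𝓝[>] 0, ∀ q : G ⧸ H, ∀ f : G → X, IsPseudoOrbit S φ δ f →
      ∀ x, dist (f (q.out * x)) (φ q.out (f x)) < ε / 2 :=
    eventually_all.2 fun q =>
      hφ.eventually_pseudoOrbit_dist_mul_lt (hSgen ▸ Subgroup.mem_top q.out) (half_pos hε)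
  obtain ⟨δ, htrack, hδ⟩ := (htrack.and (Ioo_mem_nhdsGT hδ₁)).exists
  refine ⟨δ, hδ.1, fun f hf => ?_⟩
  obtain ⟨p, hp⟩ := hshadow _ ((hf.mono hδ.2.le).subgroup hAS)
  refine ⟨p, fun g => ?_⟩
  obtain ⟨q, h, rfl⟩ := QuotientGroup.exists_out_mul_eq H g
  calc dist (f (q.out * h)) (φ (q.out * h) p)
      ≤ dist (f (q.out * h)) (φ q.out (f h)) + dist (φ q.out (f h)) (φ q.out (φ h p)) := by
        rw [hφ.2.1]
        exact dist_triangle _ _ _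
    _ < ε / 2 + ε / 2 := add_lt_add (htrack q f hf h) (hequi _ _ (hp h) q)
    _ = ε := add_halves ε

theorem stmt1 {G : Type*} [Group G] {X : Type*} [MetricSpace X] [CompactSpace X]
    (S : Set G) (hSfin : S.Finite) (hSsym : ∀ s ∈ S, s⁻¹ ∈ S)
    (hSgen : Subgroup.closure S = ⊤)
    (φ : G → X → X) (hφ : ContGroupAction G X φ)
    (H : Subgroup G) (hH : H.FiniteIndex)
    (A : Set H) (hAfin : A.Finite) (hAsym : ∀ a ∈ A, a⁻¹ ∈ A)
    (hAgen : Subgroup.closure A = ⊤) (hAS : ∀ a ∈ A, (a : G) ∈ S)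
    (hrest : Shadowing A (fun (h : H) => φ (h : G))) :
    Shadowing S φ :=
  stmt1_general S hSgen φ hφ H hH A hAS hrest
end

section
/- Let X be a compact metric space without isolated points. If every non-atomic Borel probability measure on X is compatible with the persistent shadowing property for the continuous action φ: G × X → X, then φ has the persistent shadowing property. -/
open MeasureTheory

/-!
Fix a non-atomic Borel probability measure `μ` of full support: Lebesgue measure pushed through
a Cantor set inside the closure of each basic open set, summed with weights `2^-(n+1)`.
Compatibility of `μ` puts a point `y ∈ PSh(δ, ε/2)` in every ball of positive radius. Given a
pseudo-orbit `f` of a perturbation `ψ`, replace `f 1` by such a `y` within `η` of it; by uniform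
equicontinuity of the finitely many maps `φ s`, the result is still a `δ`-pseudo-orbit, and a
`ψ`-orbit `ε/2`-shadowing it `ε`-shadows `f`.
-/

open Set Metric Function

section Measures

open scoped ENNReal

variable {α β : Type*} [MeasurableSpace α] [MeasurableSpace β]

theorem MeasureTheory.Measure.nullSingletonClass_map_of_injective [MeasurableSingletonClass β]
    (μ : Measure α) [NullSingletonClass μ] {f : α → β} (hf : Measurable f) (hinj : Injective f) :
    NullSingletonClass (μ.map f) :=
  ⟨fun y => by
    rw [Measure.map_apply hf (measurableSet_singleton y)]
    exact Set.Subsingleton.measure_zero (fun a ha b hb => hinj (ha.trans hb.symm)) μ⟩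

theorem MeasureTheory.not_countable_of_nullSingletonClass (μ : Measure α) [IsProbabilityMeasure μ]
    [NullSingletonClass μ] : ¬Countable α := fun _ =>
  one_ne_zero (measure_univ (μ := μ) ▸ Set.countable_univ.measure_zero μ)

variable {X : Type*} [MetricSpace X] [CompleteSpace X] [MeasurableSpace X] [BorelSpace X]

theorem Perfect.exists_isProbabilityMeasure_nullSingletonClass {C : Set X} (hC : Perfect C)
    (hne : C.Nonempty) :
    ∃ ν : Measure X, IsProbabilityMeasure ν ∧ NullSingletonClass ν ∧ ν C = 1 := by
  obtain ⟨f, hfC, hfc, hfi⟩ := hC.exists_nat_bool_injection hne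
  let e := PolishSpace.measurableEquivNatBoolOfNotCountable
    (not_countable_of_nullSingletonClass (volume : Measure unitInterval))
  have hm : Measurable (f ∘ e) := hfc.measurable.comp e.measurable
  refine ⟨(volume : Measure unitInterval).map (f ∘ e),
    Measure.isProbabilityMeasure_map hm.aemeasurable,
    Measure.nullSingletonClass_map_of_injective _ hm (hfi.comp e.injective), ?_⟩
  have hpre : f ∘ e ⁻¹' C = univ := eq_univ_of_forall fun t => hfC (mem_range_self (e t))
  rw [Measure.map_apply hm hC.closed.measurableSet, hpre, measure_univ]

theorem exists_isProbabilityMeasure_nullSingletonClass_isOpenPosMeasure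
    [SecondCountableTopology X] [PerfectSpace X] [Nonempty X] :
    ∃ μ : Measure X, IsProbabilityMeasure μ ∧ NullSingletonClass μ ∧ μ.IsOpenPosMeasure := by
  obtain ⟨b, hbc, hb0, hb⟩ := TopologicalSpace.exists_countable_basis X
  obtain ⟨u, rfl⟩ := hbc.exists_eq_range <|
    let ⟨s, hs, _⟩ := hb.exists_subset_of_mem_open (mem_univ (Classical.arbitrary X)) isOpen_univ
    ⟨s, hs⟩
  have hu : ∀ n, Perfect (closure (u n)) ∧ (closure (u n)).Nonempty := fun n =>
    ⟨(hb.isOpen (mem_range_self n)).preperfect.perfect_closure,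
      (nonempty_iff_ne_empty.2 fun h => hb0 (h ▸ mem_range_self n)).closure⟩
  choose ν hνprob hνatom hνu using
    fun n => (hu n).1.exists_isProbabilityMeasure_nullSingletonClass (hu n).2
  let c : ℕ → ℝ≥0∞ := fun n => 2⁻¹ ^ (n + 1)
  refine ⟨Measure.sum fun n => c n • ν n, ⟨?_⟩, ⟨fun x => ?_⟩, ⟨fun U hU hUne => ?_⟩⟩
  · simp only [Measure.sum_apply _ MeasurableSet.univ, Measure.smul_apply, measure_univ,
      smul_eq_mul, mul_one, c, ENNReal.tsum_geometric_add_one, ENNReal.one_sub_inv_two, inv_inv]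
    exact ENNReal.inv_mul_cancel two_ne_zero ENNReal.ofNat_ne_top
  · simp [Measure.sum_apply _ (measurableSet_singleton x)]
  · obtain ⟨x, hx⟩ := hUne
    obtain ⟨C, hCx, hC, hCU⟩ := exists_mem_nhds_isClosed_subset (hU.mem_nhds hx)
    obtain ⟨_, ⟨n, rfl⟩, -, hnC⟩ := hb.mem_nhds_iff.1 hCx
    have hνU : ν n U = 1 := le_antisymm prob_le_one
      (hνu n ▸ measure_mono ((closure_minimal hnC hC).trans hCU))
    refine (lt_of_lt_of_le ?_ (Measure.le_sum (fun n => c n • ν n) n U)).ne'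
    simp only [Measure.smul_apply, hνU, smul_eq_mul, mul_one, c]
    exact ENNReal.pow_pos (ENNReal.inv_pos.2 ENNReal.ofNat_ne_top) _

end Measures

section Shadowing

variable {G : Type*} [Group G] {X : Type*} [MetricSpace X] {S : Set G} {φ ψ : G → X → X}
  {f : G → X} {y : X} {δ ε η : ℝ}

theorem dist_apply_update_le {α : Type*} [DecidableEq α] (f : α → X) (a : α) (y : X) (b : α) :
    dist (f b) (update f a y b) ≤ dist (f a) y := by
  rcases eq_or_ne b a with rfl | h
  · rw [update_self]
  · rw [update_of_ne h, dist_self]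
    exact dist_nonneg

theorem IsPseudoOrbit.update_one [DecidableEq G] (hψ1 : ∀ x, ψ 1 x = x)
    (hf : IsPseudoOrbit S ψ η f) (h1 : dist y (f 1) + η ≤ δ)
    (hS : ∀ s ∈ S, dist (ψ s (f 1)) (ψ s y) + η ≤ δ) :
    IsPseudoOrbit S ψ δ (update f 1 y) := by
  intro s hs g
  have hηδ : η ≤ δ := (le_add_of_nonneg_left dist_nonneg).trans h1
  rcases eq_or_ne g 1 with rfl | hg
  · rcases eq_or_ne s 1 with rfl | hs1
    · simpa [hψ1] using (dist_nonneg.trans_lt (hf 1 hs 1)).trans_le hηδ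
    · have hfs := hf s hs 1
      rw [mul_one] at hfs ⊢
      rw [update_of_ne hs1, update_self]
      linarith [dist_triangle (f s) (ψ s (f 1)) (ψ s y), hS s hs]
  · rw [update_of_ne hg]
    rcases eq_or_ne (s * g) 1 with hsg | hsg
    · have hfs := hf s hs g
      rw [hsg] at hfs ⊢
      rw [update_self]
      linarith [dist_triangle y (f 1) (ψ s (f g))]
    · rw [update_of_ne hsg]
      exact (hf s hs g).trans_le hηδ

theorem CloseActions.mono (h : CloseActions S φ ψ δ) (hδ : δ ≤ ε) : CloseActions S φ ψ ε :=
  fun s hs x => (h s hs x).trans_le hδ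

theorem CloseActions.dist_lt {s : G} {x : X} (h : CloseActions S φ ψ δ) (hs : s ∈ S)
    (hxy : dist (φ s x) (φ s y) < η) : dist (ψ s x) (ψ s y) < δ + η + δ := by
  linarith [dist_triangle4 (ψ s x) (φ s x) (φ s y) (ψ s y), dist_comm (ψ s x) (φ s x),
    h s hs x, h s hs y]

theorem exists_shadowing_point_of_near_mem_PShSet (hψ : ContGroupAction G X ψ)
    (hclose : CloseActions S φ ψ δ) (hf : IsPseudoOrbit S ψ η f) (hy : y ∈ PShSet S φ δ ε)
    (h1 : dist y (f 1) + η ≤ δ) (hS : ∀ s ∈ S, dist (ψ s (f 1)) (ψ s y) + η ≤ δ) :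
    ∃ p, ∀ g, dist (f g) (ψ g p) < dist (f 1) y + ε := by
  classical
  obtain ⟨p, hp⟩ := hy ψ hψ hclose _ (hf.update_one hψ.2.2 h1 hS) (update_self 1 y f)
  exact ⟨p, fun g => (dist_triangle _ _ _).trans_lt
    (add_lt_add_of_le_of_lt (dist_apply_update_le f 1 y g) (hp g))⟩

end Shadowing

theorem stmt10_general {G : Type*} [Group G] {X : Type*} [MetricSpace X] [CompactSpace X]
    [MeasurableSpace X] [BorelSpace X]
    (hiso : ∀ x : X, Filter.NeBot (nhdsWithin x {x}ᶜ))
    (S : Set G) (hSfin : S.Finite)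
    (φ : G → X → X) (hφ : ContGroupAction G X φ)
    (hall : ∀ μ : Measure X, IsProbabilityMeasure μ → (∀ x : X, μ {x} = 0) →
      CompatiblePSh S φ μ) :
    PersistentShadowing S φ := by
  rcases isEmpty_or_nonempty X with _ | _
  · exact fun ε _ => ⟨1, one_pos, fun _ _ _ f _ => isEmptyElim (f 1)⟩
  have : PerfectSpace X := perfectSpace_iff_forall_not_isolated.2 hiso
  obtain ⟨μ, hμ, _, _⟩ :=
    exists_isProbabilityMeasure_nullSingletonClass_isOpenPosMeasure (X := X)
  have hequi : UniformEquicontinuous fun s : S => φ s :=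
    have := hSfin.to_subtype
    uniformEquicontinuous_finite.2 fun s => CompactSpace.uniformContinuous_of_continuous (hφ.1 s)
  intro ε hε
  obtain ⟨δ, hδ, hPSh⟩ := hall μ hμ measure_singleton (ε / 2) (half_pos hε)
  obtain ⟨θ, hθ, hφθ⟩ := Metric.uniformEquicontinuous_iff.1 hequi (δ / 4) (by positivity)
  set η := min (min (δ / 4) θ) (ε / 2)
  have hηδ : η ≤ δ / 4 := (min_le_left _ _).trans (min_le_left _ _)
  have hηθ : η ≤ θ := (min_le_left _ _).trans (min_le_right _ _)
  have hηε : η ≤ ε / 2 := min_le_right _ _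
  have hη : 0 < η := lt_min (lt_min (by positivity) hθ) (half_pos hε)
  refine ⟨η, hη, fun ψ hψ hclose f hf => ?_⟩
  obtain ⟨y, hyf, hy⟩ := hPSh _ measurableSet_ball (measure_ball_pos μ (f 1) hη)
  rw [mem_ball] at hyf
  obtain ⟨p, hp⟩ := exists_shadowing_point_of_near_mem_PShSet hψ (hclose.mono (by linarith)) hf
    hy (by linarith) fun s hs => by
      have := hclose.dist_lt hs (hφθ (f 1) y (by rw [dist_comm]; linarith) ⟨s, hs⟩)
      linarith
  exact ⟨p, fun g => (hp g).trans_le (by rw [dist_comm]; linarith)⟩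

theorem stmt10 {G : Type*} [Group G] {X : Type*} [MetricSpace X] [CompactSpace X]
    [MeasurableSpace X] [BorelSpace X]
    (hiso : ∀ x : X, Filter.NeBot (nhdsWithin x {x}ᶜ))
    (S : Set G) (hSfin : S.Finite) (hSsym : ∀ s ∈ S, s⁻¹ ∈ S)
    (hSgen : Subgroup.closure S = ⊤)
    (φ : G → X → X) (hφ : ContGroupAction G X φ)
    (hall : ∀ μ : Measure X, IsProbabilityMeasure μ → (∀ x : X, μ {x} = 0) →
      CompatiblePSh S φ μ) :
    PersistentShadowing S φ :=
  stmt10_general hiso S hSfin φ hφ hall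
end

section
/- A continuous action φ: G × X → X on a compact metric space has the persistent shadowing property on a compact set K ⊆ X if and only if every point of K is a persistent shadowable point, i.e., K ⊆ PSh(φ). -/
open MeasureTheory

/-!
Fix `ε` and a point `x ∈ PSh(φ)`, with its `δ₀` for `ε / 2`. If `f` is a `δ`-pseudo orbit of a
`δ`-perturbation `ψ` and `f 1` is `δ`-close to `x`, resetting `f 1 := x` gives a `4δ`-pseudo orbit
through `x`: the only new errors are at the arrows into and out of `1`, and the latter are controlled
by the continuity at `x` of the finitely many generators `φ s`. For `4δ ≤ δ₀` it is `ε / 2`-shadowed,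
hence so is `f` within `ε`. Thus one `δ` works on a whole neighbourhood of `x`, and compactness of
`K` makes it uniform on `K`.
-/

open Filter Topology

def PersistentShadowingOn {G : Type*} [Group G] {X : Type*} [MetricSpace X]
    (S : Set G) (φ : G → X → X) (K : Set X) (δ ε : ℝ) : Prop :=
  ∀ ψ : G → X → X, ContGroupAction G X ψ → CloseActions S φ ψ δ → ∀ f : G → X,
    IsPseudoOrbit S ψ δ f → f 1 ∈ K → ∃ p : X, ∀ g : G, dist (f g) (ψ g p) < ε

section

variable {G : Type*} [Group G] {X : Type*} [MetricSpace X] {S : Set G} {φ ψ : G → X → X}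

theorem PersistentShadowingOn.mono {K K' : Set X} {δ δ' ε : ℝ}
    (h : PersistentShadowingOn S φ K δ ε) (hK : K' ⊆ K) (hδ : δ' ≤ δ) :
    PersistentShadowingOn S φ K' δ' ε := fun ψ hψ hclose f hf hf1 =>
  h ψ hψ (fun s hs x => (hclose s hs x).trans_le hδ) f
    (fun s hs g => (hf s hs g).trans_le hδ) (hK hf1)

theorem PersistentShadowingOn.union {K K' : Set X} {δ ε : ℝ}
    (h : PersistentShadowingOn S φ K δ ε) (h' : PersistentShadowingOn S φ K' δ ε) :
    PersistentShadowingOn S φ (K ∪ K') δ ε := fun ψ hψ hclose f hf hf1 =>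
  hf1.elim (h ψ hψ hclose f hf) (h' ψ hψ hclose f hf)

theorem IsPseudoOrbit.update_one_s12 [DecidableEq G] {δ : ℝ} {f : G → X} {x : X}
    (hψ : ∀ y, ψ 1 y = y) (hf : IsPseudoOrbit S ψ δ f) (hclose : CloseActions S φ ψ δ)
    (hx : dist (f 1) x < δ) (hφx : ∀ s ∈ S, dist (φ s (f 1)) (φ s x) < δ) :
    IsPseudoOrbit S ψ (4 * δ) (Function.update f 1 x) := by
  have hδ : 0 < δ := dist_nonneg.trans_lt hx
  intro s hs g
  by_cases hg : g = 1
  · subst hg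
    by_cases hs1 : s = 1
    · subst hs1
      simp [hψ, hδ]
    · simp only [mul_one, Function.update_of_ne hs1, Function.update_self]
      have h₁ : dist (f s) (ψ s (f 1)) < δ := by simpa using hf s hs 1
      have h₂ := hclose s hs (f 1)
      have h₃ := hφx s hs
      have h₄ := hclose s hs x
      rw [dist_comm] at h₂
      linarith [dist_triangle4 (f s) (ψ s (f 1)) (φ s (f 1)) (φ s x),
        dist_triangle (f s) (φ s x) (ψ s x)]
  · rw [Function.update_of_ne hg]
    by_cases hsg : s * g = 1
    · rw [hsg, Function.update_self]
      have h₁ : dist (f 1) (ψ s (f g)) < δ := hsg ▸ hf s hs g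
      calc dist x (ψ s (f g)) ≤ dist x (f 1) + dist (f 1) (ψ s (f g)) := dist_triangle _ _ _
        _ < 4 * δ := by rw [dist_comm] at hx; linarith
    · rw [Function.update_of_ne hsg]
      linarith [hf s hs g]

theorem PShPoint.exists_mem_nhds_persistentShadowingOn (hS : S.Finite)
    {x : X} (hφ : ∀ s ∈ S, ContinuousAt (φ s) x) (hx : PShPoint S φ x) {ε : ℝ} (hε : 0 < ε) :
    ∃ U ∈ 𝓝 x, ∃ δ > 0, PersistentShadowingOn S φ U δ ε := by
  classical
  obtain ⟨δ₀, hδ₀, hx⟩ := hx (ε / 2) (half_pos hε)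
  set δ := min (δ₀ / 4) (ε / 2)
  have hδ : 0 < δ := lt_min (by positivity) (half_pos hε)
  have hU : ∀ᶠ y in 𝓝 x, dist y x < δ ∧ ∀ s ∈ S, dist (φ s y) (φ s x) < δ :=
    (show ∀ᶠ y in 𝓝 x, dist y x < δ from Metric.ball_mem_nhds x hδ).and <|
      hS.eventually_all.2 fun s hs => (hφ s hs).eventually (Metric.ball_mem_nhds _ hδ)
  refine ⟨_, hU, δ, hδ, fun ψ hψ hclose f hf ⟨hf1, hφf1⟩ => ?_⟩
  have hδ₀δ : 4 * δ ≤ δ₀ := by linarith [min_le_left (δ₀ / 4) (ε / 2)]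
  obtain ⟨p, hp⟩ := hx ψ hψ (fun s hs y => (hclose s hs y).trans_le (by linarith))
    (Function.update f 1 x)
    (fun s hs g => (hf.update_one_s12 hψ.2.2 hclose hf1 hφf1 s hs g).trans_le hδ₀δ)
    (Function.update_self _ _ _)
  refine ⟨p, fun g => ?_⟩
  by_cases hg : g = 1
  · subst hg
    have h := hp 1
    rw [Function.update_self] at h
    linarith [dist_triangle (f 1) x (ψ 1 p), min_le_right (δ₀ / 4) (ε / 2)]
  · have h := hp g
    rw [Function.update_of_ne hg] at h
    linarith

theorem IsCompact.exists_persistentShadowingOn {K : Set X} (hK : IsCompact K) (hS : S.Finite)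
    (hφ : ∀ x ∈ K, ∀ s ∈ S, ContinuousAt (φ s) x) (hPSh : ∀ x ∈ K, PShPoint S φ x)
    {ε : ℝ} (hε : 0 < ε) : ∃ δ > 0, PersistentShadowingOn S φ K δ ε := by
  refine hK.induction_on (p := fun U => ∃ δ > 0, PersistentShadowingOn S φ U δ ε)
    ⟨1, one_pos, fun _ _ _ f _ hf1 => absurd hf1 (Set.notMem_empty (f 1))⟩
    (fun U V hUV ⟨δ, hδ, h⟩ => ⟨δ, hδ, h.mono hUV le_rfl⟩)
    (fun U V ⟨δ, hδ, h⟩ ⟨δ', hδ', h'⟩ =>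
      ⟨min δ δ', lt_min hδ hδ', (h.mono le_rfl (min_le_left _ _)).union
        (h'.mono le_rfl (min_le_right _ _))⟩)
    fun x hx => ?_
  obtain ⟨U, hU, hsh⟩ := (hPSh x hx).exists_mem_nhds_persistentShadowingOn hS (hφ x hx) hε
  exact ⟨U, mem_nhdsWithin_of_mem_nhds hU, hsh⟩

end

theorem stmt12_general {G : Type*} [Group G] {X : Type*} [MetricSpace X]
    (S : Set G) (hSfin : S.Finite)
    (φ : G → X → X) (hφ : ContGroupAction G X φ)
    (K : Set X) (hK : IsCompact K) :
    (∀ ε > (0:ℝ), ∃ δ > (0:ℝ), ∀ ψ : G → X → X, ContGroupAction G X ψ →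
      CloseActions S φ ψ δ → ∀ f : G → X, IsPseudoOrbit S ψ δ f →
        f 1 ∈ K → ∃ p : X, ∀ g : G, dist (f g) (ψ g p) < ε) ↔
      K ⊆ {x : X | PShPoint S φ x} := by
  refine ⟨fun H x hx ε hε => ?_, fun H ε hε => ?_⟩
  · obtain ⟨δ, hδ, hδK⟩ := H ε hε
    exact ⟨δ, hδ, fun ψ hψ hclose f hf hf1 => hδK ψ hψ hclose f hf (hf1 ▸ hx)⟩
  · exact hK.exists_persistentShadowingOn hSfin (fun _ _ s _ => (hφ.1 s).continuousAt) H hε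

theorem stmt12 {G : Type*} [Group G] {X : Type*} [MetricSpace X] [CompactSpace X]
    (S : Set G) (hSfin : S.Finite) (hSsym : ∀ s ∈ S, s⁻¹ ∈ S)
    (hSgen : Subgroup.closure S = ⊤)
    (φ : G → X → X) (hφ : ContGroupAction G X φ)
    (K : Set X) (hK : IsCompact K) :
    (∀ ε > (0:ℝ), ∃ δ > (0:ℝ), ∀ ψ : G → X → X, ContGroupAction G X ψ →
      CloseActions S φ ψ δ → ∀ f : G → X, IsPseudoOrbit S ψ δ f →
        f 1 ∈ K → ∃ p : X, ∀ g : G, dist (f g) (ψ g p) < ε) ↔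
      K ⊆ {x : X | PShPoint S φ x} :=
  stmt12_general S hSfin φ hφ K hK
end
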